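/- If h : ℝ → ℝ is continuously differentiable and both h and h' are square-integrable, then the function ρ(x) = ∫ h(y - x) h(y) dy is twice continuously differentiable and its derivatives ρ' and ρ'' are bounded. -/

import Mathlib

/-!
Every correlation `x ↦ ∫ f (y - x) * g y` of two `L²` functions is the inner product of a translate
of `f` with `g` in `L²`; since translation acts continuously and isometrically on `L²`, it is
continuous and bounded by `‖f‖₂ ‖g‖₂`. If moreover `f` is `C¹` with `f' ∈ L²`, the fundamental
theorem of calculus in `x` followed by Fubini shows that its derivative is minus the correlation
of `f'` with `g`. Hence `ρ' x = -∫ h' (y - x) * h y = -∫ h (y + x) * h' y`: after the substitution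
`y ↦ y + x` the factor `h'`, which need not be differentiable, sits in the second slot, so `ρ'` can
be differentiated once more. Both `ρ'` and `ρ''` are correlations of `L²` functions, hence
continuous and bounded.
-/

open MeasureTheory Set Function

noncomputable def correlation (f g : ℝ → ℝ) (x : ℝ) : ℝ := ∫ y, f (y - x) * g y

theorem correlation_eq_neg_swap (f g : ℝ → ℝ) (x : ℝ) :
    correlation f g x = correlation g f (-x) := by
  rw [correlation, ← integral_add_right_eq_self _ x, correlation]
  simp only [add_sub_cancel_right, sub_neg_eq_add, mul_comm]

section Correlation

variable {f g : ℝ → ℝ}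

theorem translate_mul_ae_eq_inner (hf : MemLp f 2 volume) (hg : MemLp g 2 volume) (x : ℝ) :
    (fun y => f (y - x) * g y) =ᵐ[volume]
      fun y => inner ℝ ((DomAddAct.mk (-x) +ᵥ hf.toLp f : Lp ℝ 2 volume) y) (hg.toLp g y) := by
  filter_upwards [DomAddAct.vadd_Lp_ae_eq (DomAddAct.mk (-x)) (hf.toLp f),
    (measurePreserving_add_left volume (-x)).quasiMeasurePreserving.ae_eq_comp hf.coeFn_toLp,
    hg.coeFn_toLp] with y h_vadd h_comp h_g
  simp only [Equiv.symm_apply_apply, vadd_eq_add, comp_apply] at h_vadd h_comp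
  rw [h_vadd, h_comp, h_g, neg_add_eq_sub, real_inner_eq_re_inner]
  simp [mul_comm]

theorem correlation_eq_inner (hf : MemLp f 2 volume) (hg : MemLp g 2 volume) (x : ℝ) :
    correlation f g x = inner ℝ (DomAddAct.mk (-x) +ᵥ hf.toLp f) (hg.toLp g) :=
  (integral_congr_ae (translate_mul_ae_eq_inner hf hg x)).trans (L2.inner_def _ _).symm

theorem integrable_translate_mul (hf : MemLp f 2 volume) (hg : MemLp g 2 volume) (x : ℝ) :
    Integrable (fun y => f (y - x) * g y) :=
  (L2.integrable_inner _ _).congr (translate_mul_ae_eq_inner hf hg x).symm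

theorem continuous_correlation (hf : MemLp f 2 volume) (hg : MemLp g 2 volume) :
    Continuous (correlation f g) := by
  have : Fact ((2 : ENNReal) ≠ ⊤) := ⟨ENNReal.ofNat_ne_top⟩
  simp only [funext (correlation_eq_inner hf hg)]
  exact ((DomAddAct.continuous_mk.comp continuous_neg).vadd continuous_const).inner continuous_const

theorem abs_correlation_le (hf : MemLp f 2 volume) (hg : MemLp g 2 volume) (x : ℝ) :
    |correlation f g x| ≤ (eLpNorm f 2 volume).toReal * (eLpNorm g 2 volume).toReal := by
  rw [correlation_eq_inner hf hg, ← Lp.norm_toLp f hf, ← Lp.norm_toLp g hg,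
    ← DomAddAct.norm_vadd_Lp (DomAddAct.mk (-x))]
  exact abs_real_inner_le_norm _ _

theorem integrable_prod_translate_mul {μ : Measure ℝ} [IsFiniteMeasure μ]
    (hf : MemLp f 2 volume) (hg : MemLp g 2 volume) :
    Integrable (uncurry fun t y => f (y - t) * g y) (μ.prod volume) := by
  have hmeas : AEStronglyMeasurable (uncurry fun t y => f (y - t) * g y) (μ.prod volume) := by
    refine AEStronglyMeasurable.mul ?_ hg.aestronglyMeasurable.comp_snd
    exact hf.aestronglyMeasurable.comp_quasiMeasurePreserving
      ((quasiMeasurePreserving_sub_of_right_invariant volume μ).comp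
        Measure.measurePreserving_swap.quasiMeasurePreserving)
  refine (integrable_prod_iff hmeas).2 ⟨.of_forall (integrable_translate_mul hf hg), ?_⟩
  have h_norm : (fun t => ∫ y, ‖uncurry (fun t y => f (y - t) * g y) (t, y)‖) =
      correlation (‖f ·‖) (‖g ·‖) := by
    ext t; simp only [uncurry_apply_pair, norm_mul, correlation]
  rw [h_norm]
  refine .of_bound (continuous_correlation hf.norm hg.norm).aestronglyMeasurable
    ((eLpNorm f 2 volume).toReal * (eLpNorm g 2 volume).toReal) (.of_forall fun t => ?_)
  rw [Real.norm_eq_abs]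
  simpa only [eLpNorm_norm] using abs_correlation_le hf.norm hg.norm t

theorem correlation_sub_correlation (hf1 : ContDiff ℝ 1 f) (hf : MemLp f 2 volume)
    (hf' : MemLp (deriv f) 2 volume) (hg : MemLp g 2 volume) (a b : ℝ) :
    correlation f g a - correlation f g b = ∫ t in a..b, correlation (deriv f) g t := by
  have h_ftc (y : ℝ) : ∫ t in a..b, deriv f (y - t) = f (y - a) - f (y - b) := by
    rw [intervalIntegral.integral_comp_sub_left (deriv f) y]
    exact intervalIntegral.integral_deriv_eq_sub
      (fun x _ => (hf1.differentiable one_ne_zero).differentiableAt)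
      ((hf1.continuous_deriv le_rfl).intervalIntegrable _ _)
  calc correlation f g a - correlation f g b
      = ∫ y, (∫ t in a..b, deriv f (y - t)) * g y := by
        rw [correlation, correlation,
          ← integral_sub (integrable_translate_mul hf hg a) (integrable_translate_mul hf hg b)]
        simp_rw [h_ftc, sub_mul]
    _ = ∫ y, ∫ t in a..b, deriv f (y - t) * g y := by
        simp_rw [intervalIntegral.integral_mul_const]
    _ = ∫ t in a..b, correlation (deriv f) g t :=
      have : IsFiniteMeasure (volume.restrict (uIoc a b)) := Real.isFiniteMeasure_restrict_Ioc _ _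
      (intervalIntegral_integral_swap (integrable_prod_translate_mul hf' hg)).symm

theorem hasDerivAt_correlation (hf1 : ContDiff ℝ 1 f) (hf : MemLp f 2 volume)
    (hf' : MemLp (deriv f) 2 volume) (hg : MemLp g 2 volume) (x : ℝ) :
    HasDerivAt (correlation f g) (-correlation (deriv f) g x) x := by
  have h_eq : correlation f g =
      fun b => correlation f g 0 - ∫ t in (0 : ℝ)..b, correlation (deriv f) g t := by
    ext b
    rw [← correlation_sub_correlation hf1 hf hf' hg, sub_sub_cancel]
  rw [h_eq]
  exact ((continuous_correlation hf' hg).integral_hasStrictDerivAt 0 x).hasDerivAt.const_sub _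

end Correlation

theorem contDiff_two_of_hasDerivAt {𝕜 F : Type*} [NontriviallyNormedField 𝕜]
    [NormedAddCommGroup F] [NormedSpace 𝕜 F] {f f₁ f₂ : 𝕜 → F}
    (h₁ : ∀ x, HasDerivAt f (f₁ x) x) (h₂ : ∀ x, HasDerivAt f₁ (f₂ x) x) (h₂c : Continuous f₂) :
    ContDiff 𝕜 2 f := by
  have hd₁ : deriv f = f₁ := funext fun x => (h₁ x).deriv
  have hd₂ : deriv f₁ = f₂ := funext fun x => (h₂ x).deriv
  rw [show (2 : WithTop ℕ∞) = 1 + 1 from rfl, contDiff_succ_iff_deriv, hd₁,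
    contDiff_one_iff_deriv, hd₂]
  exact ⟨fun x => (h₁ x).differentiableAt, by simp, fun x => (h₂ x).differentiableAt, h₂c⟩

/-- If `h : ℝ → ℝ` is continuously differentiable and both `h` and `h'` are
square-integrable, then the autocorrelation `ρ(x) = ∫ h(y - x) h(y) dy` is twice
continuously differentiable and its derivatives `ρ'` and `ρ''` are bounded. -/
theorem autocorrelation_contDiff_two_bounded_derivs
    (h : ℝ → ℝ) (hC1 : ContDiff ℝ 1 h)
    (hL2 : MemLp h 2 volume)
    (hL2' : MemLp (deriv h) 2 volume)
    (ρ : ℝ → ℝ) (hρ : ∀ x : ℝ, ρ x = ∫ y : ℝ, h (y - x) * h y) :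
    ContDiff ℝ 2 ρ ∧
      ∃ C : ℝ, (∀ x : ℝ, |deriv ρ x| ≤ C) ∧ (∀ x : ℝ, |deriv (deriv ρ) x| ≤ C) := by
  have hρ_eq : ρ = correlation h h := funext hρ
  set ρ₁ := fun x => -correlation h (deriv h) (-x)
  set ρ₂ := fun x => -correlation (deriv h) (deriv h) (-x)
  have hρ₁ (x : ℝ) : HasDerivAt ρ (ρ₁ x) x := by
    rw [hρ_eq, show ρ₁ x = -correlation (deriv h) h x by rw [correlation_eq_neg_swap]]
    exact hasDerivAt_correlation hC1 hL2 hL2' hL2 x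
  have hρ₂ (x : ℝ) : HasDerivAt ρ₁ (ρ₂ x) x := by
    have := ((hasDerivAt_correlation hC1 hL2 hL2' hL2' (-x)).comp x (hasDerivAt_neg x)).neg
    rwa [mul_neg_one, neg_neg] at this
  have hρ₂c : Continuous ρ₂ := ((continuous_correlation hL2' hL2').comp continuous_neg).neg
  have hderiv : deriv ρ = ρ₁ := funext fun x => (hρ₁ x).deriv
  set A := (eLpNorm h 2 volume).toReal
  set B := (eLpNorm (deriv h) 2 volume).toReal
  refine ⟨contDiff_two_of_hasDerivAt hρ₁ hρ₂ hρ₂c, max (A * B) (B * B), fun x => ?_, fun x => ?_⟩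
  · rw [hderiv, abs_neg]
    exact (abs_correlation_le hL2 hL2' _).trans (le_max_left _ _)
  · rw [hderiv, (hρ₂ x).deriv, abs_neg]
    exact (abs_correlation_le hL2' hL2' _).trans (le_max_right _ _)
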